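/- Let k ≥ 2 and suppose ω > 0 and 0 < ω̂_{k+1} < 1/k satisfy (1+ω)^{k+1}/ω = (1+ω̂_{k+1})^{k+1}/ω̂_{k+1}, and suppose ω̂ = ω^{k/(k+1)} · ω̂_{k+1}^{1/(k+1)}. Then ω̂ > ω/(ω+1). -/
import Mathlib


theorem hat_omega_gt (k : ℕ) (hk : 2 ≤ k) (omega omegaHat omegaHatK : ℝ)
    (homega : 0 < omega) (h0 : 0 < omegaHatK) (h1 : omegaHatK < 1 / k)
    (heq : (1 + omega) ^ (k + 1) / omega = (1 + omegaHatK) ^ (k + 1) / omegaHatK)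
    (hdef : omegaHat = omega ^ ((k : ℝ) / (k + 1)) * omegaHatK ^ ((1 : ℝ) / (k + 1))) :
    omegaHat > omega / (omega + 1) := by
  have hk1 : ((k : ℝ) + 1) ≠ 0 := by positivity
  have hhatpos : 0 < omegaHat := by
    rw [hdef]; positivity
  have hpow : omegaHat ^ (k + 1) = omega ^ k * omegaHatK := by
    rw [hdef, mul_pow,
        ← Real.rpow_natCast (omega ^ ((k : ℝ) / (k + 1))) (k + 1),
        ← Real.rpow_natCast (omegaHatK ^ ((1 : ℝ) / (k + 1))) (k + 1),
        ← Real.rpow_mul homega.le, ← Real.rpow_mul h0.le]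
    push_cast
    rw [div_mul_cancel₀ _ hk1, one_div_mul_cancel hk1,
        Real.rpow_natCast, Real.rpow_one]
  have h1omega : (0 : ℝ) < 1 + omega := by linarith
  have heq' : omegaHatK * (1 + omega) ^ (k + 1) = omega * (1 + omegaHatK) ^ (k + 1) := by
    field_simp at heq
    linarith [heq]
  have hgt1 : 1 < (1 + omegaHatK) ^ (k + 1) := by
    apply one_lt_pow₀ (by linarith) (by omega)
  have hK : omega / (1 + omega) ^ (k + 1) < omegaHatK := by
    rw [div_lt_iff₀ (by positivity)]
    nlinarith
  have hfinal : (omega / (omega + 1)) ^ (k + 1) < omegaHat ^ (k + 1) := by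
    rw [hpow, div_pow, pow_succ]
    rw [div_lt_iff₀ (by positivity)]
    have : omega ^ k * omega = omega ^ k * ((omega / (1 + omega) ^ (k + 1)) * (1 + omega) ^ (k + 1)) := by
      field_simp
    calc omega ^ k * omega = omega ^ k * (omega / (1 + omega) ^ (k + 1)) * (1 + omega) ^ (k + 1) := by
          rw [this]; ring
      _ < omega ^ k * omegaHatK * (1 + omega) ^ (k + 1) := by
          apply mul_lt_mul_of_pos_right _ (by positivity)
          exact mul_lt_mul_of_pos_left hK (by positivity)
      _ = omega ^ k * omegaHatK * (omega + 1) ^ (k + 1) := by ring_nf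
  exact lt_of_pow_lt_pow_left₀ (k + 1) hhatpos.le hfinal
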